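/- arXiv:2312.16058 — 3 statements merged into one kernel-verified Lean document; each statement's English description precedes it below -/
import Mathlib

section
/- Let G be a Gauss diagram and let G* be the Gauss diagram of the mirror image (obtained by reversing the direction of every chord and negating every sign). Then for every chord c with corresponding chord c' in G*: sign(c') = −sign(c), i(c') = i(c), r(c') = l(c), l(c') = r(c), and g_{c'}(v) = g_c(v^{−1}). Consequently F_{G*}(u,v) = −F_G(u,v^{−1}). -/
open Finsupp

/-- Formal Laurent polynomials in `v` over `ℤ`, used as exponents of `u`. -/
abbrev LaurentExp : Type := ℤ →₀ ℤ

/-- Formal `ℤ`-linear combinations of symbols `u^p`, `p` a Laurent polynomial in `v`. -/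
abbrev FPoly : Type := LaurentExp →₀ ℤ

/-- A combinatorial Gauss diagram of a knotoid diagram: `n` signed directed chords,
whose `2*n` endpoints (an over-endpoint and an under-endpoint for each chord) occupy
distinct positions along the oriented arc.  The two endpoints of the arc itself lie
before position `0` and after position `2*n - 1`. -/
structure GaussDiagram where
  n : ℕ
  sign : Fin n → ℤ
  overEnd : Fin n → Fin (2 * n)
  under : Fin n → Fin (2 * n)
  sign_pm : ∀ c, sign c = 1 ∨ sign c = -1
  endpoints_inj : Function.Injective (Sum.elim overEnd under)

namespace GaussDiagram

variable (G : GaussDiagram)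

/-- Position `p` lies strictly between the two endpoints of chord `c`,
i.e. on the side of `c` NOT containing the endpoints of the arc
(the complement of the lead side of `c`). -/
def between (c : Fin G.n) (p : Fin (2 * G.n)) : Prop :=
  min (G.overEnd c).val (G.under c).val < p.val ∧ p.val < max (G.overEnd c).val (G.under c).val

instance (c : Fin G.n) (p : Fin (2 * G.n)) : Decidable (G.between c p) := by
  unfold between; infer_instance

/-- Chord `e` crosses chord `c`: exactly one endpoint of `e` lies between the endpoints of `c`. -/
def crosses (c e : Fin G.n) : Prop :=
  e ≠ c ∧ (G.between c (G.overEnd e) ↔ ¬ G.between c (G.under e))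

instance (c e : Fin G.n) : Decidable (G.crosses c e) := by
  unfold crosses; infer_instance

/-- The signed contribution of the endpoints of chord `e` lying on the lead side of `c`
(the over-endpoint counts `sign e`, the under-endpoint counts `- sign e`). -/
def contrib (c e : Fin G.n) : ℤ :=
  (if ¬ G.between c (G.overEnd e) then G.sign e else 0)
    + (if ¬ G.between c (G.under e) then - G.sign e else 0)

/-- The intersection index `i(c)`: the sum of the signs of the chord-endpoints lying on
the lead side of `c`, excluding the endpoints of `c` itself. -/
def i (c : Fin G.n) : ℤ := ∑ e ∈ Finset.univ.erase c, G.contrib c e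

/-- `r(c)`: chords crossing `c` whose over-endpoint lies on the lead side of `c`
(chords pointing away from the lead side). -/
def rset (c : Fin G.n) : Finset (Fin G.n) :=
  Finset.univ.filter fun e => G.crosses c e ∧ ¬ G.between c (G.overEnd e)

/-- `l(c)`: chords crossing `c` whose under-endpoint lies on the lead side of `c`
(chords pointing toward the lead side). -/
def lset (c : Fin G.n) : Finset (Fin G.n) :=
  Finset.univ.filter fun e => G.crosses c e ∧ ¬ G.between c (G.under e)

end GaussDiagram

/-- The reduction map `φ` modulo `m`, realized by canonical representatives in `ℤ`:
for `m ≠ 0` it picks the representative in `[0, m)`; for `m = 0` it is the identity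
(no reduction, matching `ℤ[v,v⁻¹]/(v⁰ - 1) = ℤ[v,v⁻¹]`). -/
def redExp (m : ℕ) (k : ℤ) : ℤ := if m = 0 then k else k % (m : ℤ)

namespace GaussDiagram

variable (G : GaussDiagram)

/-- The index function `g_c(v) = Σ_{r ∈ r(c)} sign(r) v^{φ_c(i(r))} - Σ_{l ∈ l(c)} sign(l) v^{φ_c(-i(l))}`,
an element of `ℤ[v,v⁻¹]/(v^{|i(c)|} - 1)` realized via canonical exponent representatives. -/
noncomputable def gfun (c : Fin G.n) : LaurentExp :=
  (∑ e ∈ G.rset c, G.sign e • Finsupp.single (redExp (G.i c).natAbs (G.i e)) (1 : ℤ))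
    - ∑ e ∈ G.lset c, G.sign e • Finsupp.single (redExp (G.i c).natAbs (- G.i e)) (1 : ℤ)

/-- The F-polynomial `F_G(u,v) = Σ_c sign(c) (u^{g_c(v)} - 1)`. -/
noncomputable def F : FPoly :=
  ∑ c : Fin G.n, G.sign c • (Finsupp.single (G.gfun c) (1 : ℤ) - Finsupp.single 0 1)

end GaussDiagram

/-- The Gauss diagram `G*` of the mirror image: every chord's direction is reversed
(over- and under-endpoints are exchanged) and every sign is negated. -/
def GaussDiagram.mirror (G : GaussDiagram) : GaussDiagram where
  n := G.n
  sign c := - G.sign c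
  overEnd := G.under
  under := G.overEnd
  sign_pm c := by rcases G.sign_pm c with h | h <;> simp [h]
  endpoints_inj := by
    intro x y h
    have := @G.endpoints_inj (x.swap) (y.swap)
      (by cases x <;> cases y <;> simpa using h)
    cases x <;> cases y <;> simpa using this

/-- The substitution `v ↦ v⁻¹` performed in the quotient ring `ℤ[v,v⁻¹]/(v^m - 1)`:
each exponent `k` is replaced by the canonical representative of `-k` mod `m`. -/
noncomputable def vinvAt (m : ℕ) : LaurentExp → LaurentExp :=
  Finsupp.mapDomain fun k => redExp m (-k)

/-- `F_G(u, v⁻¹)`: the F-polynomial with `v ↦ v⁻¹` substituted in each exponent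
`g_c(v)`, the substitution being taken in the appropriate ring `ℤ[v,v⁻¹]/(v^{|i(c)|}-1)`. -/
noncomputable def GaussDiagram.Fvinv (G : GaussDiagram) : FPoly :=
  ∑ c : Fin G.n,
    G.sign c • (Finsupp.single (vinvAt (G.i c).natAbs (G.gfun c)) (1 : ℤ)
      - Finsupp.single 0 1)

/-! Mirroring exchanges the two endpoints of every chord, so the lead side of each chord, and with
it crossing, is unchanged. A chord's over- and under-endpoint trade places while its sign flips, so
its contribution to `i` is unchanged and `r(c)`, `l(c)` are exchanged. In `g_c` the two sums thus
trade places with opposite signs, and since `φ(-φ(k)) = φ(-k)` this is `g_c(v⁻¹)`. -/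

theorem redExp_neg_redExp (m : ℕ) (k : ℤ) : redExp m (-redExp m k) = redExp m (-k) := by
  unfold redExp
  split_ifs
  · rfl
  · exact (Int.mod_modEq k m).neg

theorem vinvAt_sub (m : ℕ) (p q : LaurentExp) : vinvAt m (p - q) = vinvAt m p - vinvAt m q :=
  map_sub (Finsupp.mapDomain.addMonoidHom _) p q

theorem vinvAt_sum_smul_single {ι : Type*} (m : ℕ) (s : Finset ι) (a k : ι → ℤ) :
    vinvAt m (∑ e ∈ s, a e • Finsupp.single (redExp m (k e)) (1 : ℤ)) =
      ∑ e ∈ s, a e • Finsupp.single (redExp m (-k e)) (1 : ℤ) := by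
  simp only [vinvAt, Finsupp.mapDomain_finsetSum, Finsupp.mapDomain_smul, Finsupp.mapDomain_single,
    redExp_neg_redExp]

namespace GaussDiagram

variable (G : GaussDiagram)

theorem vinvAt_gfun (c : Fin G.n) :
    vinvAt (G.i c).natAbs (G.gfun c) =
      (∑ e ∈ G.rset c, G.sign e • Finsupp.single (redExp (G.i c).natAbs (-G.i e)) (1 : ℤ))
        - ∑ e ∈ G.lset c, G.sign e • Finsupp.single (redExp (G.i c).natAbs (G.i e)) (1 : ℤ) := by
  rw [gfun, vinvAt_sub, vinvAt_sum_smul_single, vinvAt_sum_smul_single]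
  simp only [neg_neg]

theorem mirror_sign (c : Fin G.n) : G.mirror.sign c = - G.sign c := rfl

theorem mirror_overEnd : G.mirror.overEnd = G.under := rfl

theorem mirror_under : G.mirror.under = G.overEnd := rfl

theorem mirror_between (c : Fin G.n) (p : Fin (2 * G.n)) :
    G.mirror.between c p ↔ G.between c p := by
  unfold between
  rw [min_comm, max_comm]
  rfl

theorem mirror_crosses (c e : Fin G.n) : G.mirror.crosses c e ↔ G.crosses c e :=
  and_congr_right' <|
    (iff_congr (G.mirror_between c _) (not_congr (G.mirror_between c _))).trans iff_not_comm

theorem mirror_contrib (c e : Fin G.n) : G.mirror.contrib c e = G.contrib c e := by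
  unfold contrib
  -- unfolding the mirror's endpoints first makes the `Decidable` instances below resolvable
  rw [G.mirror_overEnd, G.mirror_under, G.mirror_sign e, neg_neg]
  simp only [G.mirror_between c (G.under e), G.mirror_between c (G.overEnd e)]
  exact add_comm _ _

theorem mirror_i (c : Fin G.n) : G.mirror.i c = G.i c :=
  Finset.sum_congr rfl fun e _ => G.mirror_contrib c e

theorem mirror_rset (c : Fin G.n) : G.mirror.rset c = G.lset c := by
  unfold rset lset
  congr 1
  funext e
  exact propext (and_congr (G.mirror_crosses c e) (not_congr (G.mirror_between c _)))

theorem mirror_lset (c : Fin G.n) : G.mirror.lset c = G.rset c := by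
  unfold rset lset
  congr 1
  funext e
  exact propext (and_congr (G.mirror_crosses c e) (not_congr (G.mirror_between c _)))

theorem mirror_gfun (c : Fin G.n) :
    G.mirror.gfun c = vinvAt (G.i c).natAbs (G.gfun c) := by
  rw [vinvAt_gfun]
  unfold gfun
  rw [G.mirror_rset c, G.mirror_lset c, G.mirror_i c]
  refine (congrArg₂ (· - ·) ?_ ?_).trans (neg_sub_neg _ _) <;>
  · rw [← Finset.sum_neg_distrib]
    exact Finset.sum_congr rfl fun e _ => by rw [G.mirror_i e]; exact neg_smul _ _

theorem mirror_F : G.mirror.F = - G.Fvinv := by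
  rw [F, Fvinv, ← Finset.sum_neg_distrib]
  exact Finset.sum_congr rfl fun c _ => by rw [G.mirror_gfun c]; exact neg_smul _ _

end GaussDiagram

/-- for the mirror Gauss diagram `G*`, every chord `c` (with corresponding
chord `c'` in `G*`) satisfies `sign(c') = - sign(c)`, `i(c') = i(c)`, `r(c') = l(c)`,
`l(c') = r(c)` and `g_{c'}(v) = g_c(v⁻¹)`; consequently `F_{G*}(u,v) = - F_G(u, v⁻¹)`. -/
theorem mirror_behavior (G : GaussDiagram) :
    (∀ c : Fin G.n, G.mirror.sign c = - G.sign c) ∧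
    (∀ c : Fin G.n, G.mirror.i c = G.i c) ∧
    (∀ c : Fin G.n, G.mirror.rset c = G.lset c) ∧
    (∀ c : Fin G.n, G.mirror.lset c = G.rset c) ∧
    (∀ c : Fin G.n, G.mirror.gfun c = vinvAt (G.i c).natAbs (G.gfun c)) ∧
    G.mirror.F = - G.Fvinv :=
  ⟨G.mirror_sign, G.mirror_i, G.mirror_rset, G.mirror_lset, G.mirror_gfun, G.mirror_F⟩
end

section
/- For the knotoid diagram D₁ (knotoid 5.1.3), whose Gauss diagram has five chords a₁, b₁, c₁, d₁, e₁ with signs (+1, +1, −1, −1, −1), intersection indices (−1, −1, 0, 0, 0), and crossing data r(a₁)=∅, l(a₁)={b₁}; r(b₁)=∅, l(b₁)={a₁}; r(c₁)={e₁}, l(c₁)={d₁}; r(d₁)={e₁}, l(d₁)={c₁}; r(e₁)={d₁}, l(e₁)={c₁}, one has g_{a₁}(v) = g_{b₁}(v) = −1 and g_{c₁}(v) = g_{d₁}(v) = g_{e₁}(v) = 0, hence F_{D₁}(u,v) = −2 + 2u^{−1}. In particular F_{D₁}(u,v) ≠ F_{D₂}(u,v) = −3u^{v^{−1}−v} + 2u^{−1}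 + 1, although the index polynomials agree: F_{D₁}(t) = F_{D₂}(t) = −2 + 2t^{−1}. -/
open Finsupp

/-- The Gauss diagram of the knotoid diagram `D₂` (knotoid 5.1.4 of Bartholomew's table):
five chords `a₂, b₂, c₂, d₂, e₂` (indexed `0,…,4`) with signs `(-1, 1, 1, -1, -1)`;
endpoint positions along the arc read off from the diagram. -/
def D2 : GaussDiagram where
  n := 5
  sign := ![-1, 1, 1, -1, -1]
  overEnd := fun c => Fin.cast (by norm_num) ((![0, 7, 2, 9, 5] : Fin 5 → Fin 10) c)
  under := fun c => Fin.cast (by norm_num) ((![3, 1, 6, 4, 8] : Fin 5 → Fin 10) c)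
  sign_pm := by decide
  endpoints_inj := by decide

/-- The Gauss diagram of the knotoid diagram `D₁` (knotoid 5.1.3 of Bartholomew's table):
five chords `a₁, b₁, c₁, d₁, e₁` (indexed `0,…,4`) with signs `(1, 1, -1, -1, -1)`. -/
def D1 : GaussDiagram where
  n := 5
  sign := ![1, 1, -1, -1, -1]
  overEnd := fun c => Fin.cast (by norm_num) ((![8, 1, 5, 3, 7] : Fin 5 → Fin 10) c)
  under := fun c => Fin.cast (by norm_num) ((![0, 9, 2, 6, 4] : Fin 5 → Fin 10) c)
  sign_pm := by decide
  endpoints_inj := by decide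

/-- The index polynomial `F_D(t) = Σ_c sign(c)(t^{i(c)} - 1)`. -/
noncomputable def GaussDiagram.indexPoly (G : GaussDiagram) : ℤ →₀ ℤ :=
  ∑ c : Fin G.n, G.sign c • (Finsupp.single (G.i c) (1 : ℤ) - Finsupp.single 0 1)

def a₁ : Fin D1.n := ⟨0, by decide⟩
def b₁ : Fin D1.n := ⟨1, by decide⟩
def c₁ : Fin D1.n := ⟨2, by decide⟩
def d₁ : Fin D1.n := ⟨3, by decide⟩
def e₁ : Fin D1.n := ⟨4, by decide⟩

/-! Everything here is a finite computation. The crossing data `r(c)`, `l(c)` and the indices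
`i(c)` of both diagrams are evaluated by the kernel; for chords with `|i(c)| = 1` the reduction
`φ_c` kills every exponent, and for `i(c) = 0` it is the identity, which makes the index
functions explicit. The two F-polynomials then differ in the coefficient of `u^{v⁻¹ - v}`,
which is `0` for `D₁` and `-3` for `D₂`. -/

@[simp] theorem redExp_zero (k : ℤ) : redExp 0 k = k := if_pos rfl

@[simp] theorem redExp_one (k : ℤ) : redExp 1 k = 0 := Int.emod_one k

theorem D1_sum_univ {M : Type*} [AddCommMonoid M] (f : Fin D1.n → M) :
    ∑ c, f c = f a₁ + f b₁ + f c₁ + f d₁ + f e₁ :=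
  Fin.sum_univ_five f

theorem D1_sign :
    D1.sign a₁ = 1 ∧ D1.sign b₁ = 1 ∧ D1.sign c₁ = -1 ∧ D1.sign d₁ = -1 ∧ D1.sign e₁ = -1 :=
  ⟨rfl, rfl, rfl, rfl, rfl⟩

theorem D1_i : D1.i a₁ = -1 ∧ D1.i b₁ = -1 ∧ D1.i c₁ = 0 ∧ D1.i d₁ = 0 ∧ D1.i e₁ = 0 := by
  decide

theorem D1_rset : D1.rset a₁ = ∅ ∧ D1.rset b₁ = ∅ ∧ D1.rset c₁ = {e₁} ∧ D1.rset d₁ = {e₁} ∧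
    D1.rset e₁ = {d₁} := by
  decide

theorem D1_lset : D1.lset a₁ = {b₁} ∧ D1.lset b₁ = {a₁} ∧ D1.lset c₁ = {d₁} ∧
    D1.lset d₁ = {c₁} ∧ D1.lset e₁ = {c₁} := by
  decide

theorem D1_gfun : D1.gfun a₁ = - single 0 1 ∧ D1.gfun b₁ = - single 0 1 ∧
    D1.gfun c₁ = 0 ∧ D1.gfun d₁ = 0 ∧ D1.gfun e₁ = 0 := by
  simp [GaussDiagram.gfun, D1_sign, D1_i, D1_rset, D1_lset]

theorem D1_F : D1.F = (2 : ℤ) • single (- single 0 1) 1 - (2 : ℤ) • single 0 1 := by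
  simp only [GaussDiagram.F, D1_sum_univ, D1_gfun, D1_sign]
  module

theorem D1_indexPoly : D1.indexPoly = (2 : ℤ) • single (-1) 1 - (2 : ℤ) • single 0 1 := by
  simp only [GaussDiagram.indexPoly, D1_sum_univ, D1_i, D1_sign]
  module

def a₂ : Fin D2.n := ⟨0, by decide⟩
def b₂ : Fin D2.n := ⟨1, by decide⟩
def c₂ : Fin D2.n := ⟨2, by decide⟩
def d₂ : Fin D2.n := ⟨3, by decide⟩
def e₂ : Fin D2.n := ⟨4, by decide⟩

theorem D2_sum_univ {M : Type*} [AddCommMonoid M] (f : Fin D2.n → M) :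
    ∑ c, f c = f a₂ + f b₂ + f c₂ + f d₂ + f e₂ :=
  Fin.sum_univ_five f

theorem D2_sign :
    D2.sign a₂ = -1 ∧ D2.sign b₂ = 1 ∧ D2.sign c₂ = 1 ∧ D2.sign d₂ = -1 ∧ D2.sign e₂ = -1 :=
  ⟨rfl, rfl, rfl, rfl, rfl⟩

theorem D2_i : D2.i a₂ = 0 ∧ D2.i b₂ = -1 ∧ D2.i c₂ = -1 ∧ D2.i d₂ = 0 ∧ D2.i e₂ = 0 := by
  decide

theorem D2_rset : D2.rset a₂ = {b₂} ∧ D2.rset b₂ = {a₂, d₂} ∧ D2.rset c₂ = {a₂, d₂} ∧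
    D2.rset d₂ = {c₂} ∧ D2.rset e₂ = {c₂} := by
  decide

theorem D2_lset : D2.lset a₂ = {c₂} ∧ D2.lset b₂ = {e₂} ∧ D2.lset c₂ = {e₂} ∧
    D2.lset d₂ = {b₂} ∧ D2.lset e₂ = {b₂} := by
  decide

theorem D2_gfun : D2.gfun a₂ = single (-1) 1 - single 1 1 ∧ D2.gfun b₂ = - single 0 1 ∧
    D2.gfun c₂ = - single 0 1 ∧ D2.gfun d₂ = single (-1) 1 - single 1 1 ∧
    D2.gfun e₂ = single (-1) 1 - single 1 1 := by
  have had : a₂ ≠ d₂ := by decide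
  simp [GaussDiagram.gfun, Finset.sum_pair had, D2_sign, D2_i, D2_rset, D2_lset]

theorem D2_F : D2.F = (-3 : ℤ) • single (single (-1) 1 - single 1 1) 1
    + (2 : ℤ) • single (- single 0 1) 1 + single 0 1 := by
  simp only [GaussDiagram.F, D2_sum_univ, D2_gfun, D2_sign]
  module

theorem D2_indexPoly : D2.indexPoly = (2 : ℤ) • single (-1) 1 - (2 : ℤ) • single 0 1 := by
  simp only [GaussDiagram.indexPoly, D2_sum_univ, D2_i, D2_sign]
  module

theorem D1_F_ne_D2_F : D1.F ≠ D2.F := by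
  set q : LaurentExp := single (-1) 1 - single 1 1
  have hq : q (-1) = 1 := by simp [q]
  have hq_ne_neg : q ≠ - single 0 1 := fun h => by simp [h] at hq
  have hq_ne_zero : q ≠ 0 := fun h => by simp [h] at hq
  intro h
  have hcoeff := DFunLike.congr_fun h q
  simp [q, D1_F, D2_F, hq_ne_neg, hq_ne_zero] at hcoeff

/-- for `D₁` (knotoid 5.1.3), one has `g_{a₁}(v) = g_{b₁}(v) = -1` and
`g_{c₁}(v) = g_{d₁}(v) = g_{e₁}(v) = 0`, hence `F_{D₁}(u,v) = -2 + 2u^{-1}`.  In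
particular `F_{D₁}(u,v) ≠ F_{D₂}(u,v) = -3u^{v⁻¹-v} + 2u^{-1} + 1`, although the index
polynomials agree: `F_{D₁}(t) = F_{D₂}(t) = -2 + 2t^{-1}`. -/
theorem D1_vs_D2 :
    (D1.gfun a₁ = - Finsupp.single 0 1 ∧ D1.gfun b₁ = - Finsupp.single 0 1 ∧
     D1.gfun c₁ = 0 ∧ D1.gfun d₁ = 0 ∧ D1.gfun e₁ = 0) ∧
    D1.F = (2 : ℤ) • Finsupp.single (- Finsupp.single 0 1) (1 : ℤ)
        - (2 : ℤ) • Finsupp.single 0 1 ∧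
    D2.F = (-3 : ℤ) • Finsupp.single (Finsupp.single (-1 : ℤ) (1 : ℤ) - Finsupp.single 1 1) (1 : ℤ)
        + (2 : ℤ) • Finsupp.single (- Finsupp.single 0 1) 1
        + Finsupp.single 0 1 ∧
    D1.F ≠ D2.F ∧
    D1.indexPoly = (2 : ℤ) • Finsupp.single (-1 : ℤ) (1 : ℤ)
        - (2 : ℤ) • Finsupp.single 0 1 ∧
    D1.indexPoly = D2.indexPoly :=
  ⟨D1_gfun, D1_F, D2_F, D1_F_ne_D2_F, D1_indexPoly, D1_indexPoly.trans D2_indexPoly.symm⟩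
end

section
/- Let G be a Gauss diagram with three mutually crossing chords c₁, c₂, c₃ in the Ω_{3a} Reidemeister III configuration, and let G' be the diagram after the move with corresponding chords c₁', c₂', c₃' (signs +1, −1, +1 respectively on both sides, all other chords and crossings unchanged). Given the relations g_{c₁}(v) = g_{c₁'}(v) + v^{φ_{c₁}(−i(c₂))} − v^{φ_{c₁}(−i(c₃))}, g_{c₂}(v) = g_{c₂'}(v) + v^{φ_{c₂}(i(c₁))} − v^{φ_{c₂}(−i(c₃))}, g_{c₃}(v) = g_{c₃'}(v) + v^{φ_{c₃}(i(c₁))} − v^{φ_{c₃}(i(c₂))}, and given i(c₁) + i(c₃) = i(c₂), it follows that g_{cₖ}(v) = g_{cₖ'}(v) for k = 1, 2, 3, and hence F_{G'}(u,v) = F_G(u,v). -/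
open Finsupp

/-!
Each relation adds a monomial `v^{φ_{cₖ}(x)}` and subtracts a monomial `v^{φ_{cₖ}(y)}` whose exponents
`x, y` differ by exactly `± i(cₖ)`, thanks to `i(c₁) + i(c₃) = i(c₂)`. After reduction modulo
`|i(cₖ)|` the two monomials coincide and cancel, so `g_{cₖ} = g_{cₖ'}`. With unchanged signs,
every summand of `F` is then the same for `G` and `G'`.
-/

theorem redExp_congr {m : ℕ} {a b : ℤ} (h : a ≡ b [ZMOD m]) : redExp m a = redExp m b := by
  unfold redExp
  split_ifs with hm
  · subst hm
    exact Int.modEq_zero_iff.1 h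
  · exact h

namespace GaussDiagram

theorem F_eq_of_sign_gfun_eq {G G' : GaussDiagram} (hn : G'.n = G.n)
    (h : ∀ c : Fin G.n, G'.sign (Fin.cast hn.symm c) = G.sign c ∧
      G'.gfun (Fin.cast hn.symm c) = G.gfun c) :
    G'.F = G.F := by
  refine (Fintype.sum_equiv (finCongr hn.symm) _ _ fun c => ?_).symm
  obtain ⟨hsign, hg⟩ := h c
  simp only [finCongr_apply, hsign, hg]

end GaussDiagram

theorem r3_invariance_general (G G' : GaussDiagram) (hn : G'.n = G.n)
    (c1 c2 c3 : Fin G.n)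
    (hs1 : G.sign c1 = 1) (hs2 : G.sign c2 = -1) (hs3 : G.sign c3 = 1)
    (hs1' : G'.sign (Fin.cast hn.symm c1) = 1)
    (hs2' : G'.sign (Fin.cast hn.symm c2) = -1)
    (hs3' : G'.sign (Fin.cast hn.symm c3) = 1)
    (hother : ∀ c : Fin G.n, c ≠ c1 → c ≠ c2 → c ≠ c3 →
        G'.sign (Fin.cast hn.symm c) = G.sign c ∧
        G'.gfun (Fin.cast hn.symm c) = G.gfun c)
    (hrel1 : G.gfun c1 = G'.gfun (Fin.cast hn.symm c1)
        + Finsupp.single (redExp (G.i c1).natAbs (- G.i c2)) 1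
        - Finsupp.single (redExp (G.i c1).natAbs (- G.i c3)) 1)
    (hrel2 : G.gfun c2 = G'.gfun (Fin.cast hn.symm c2)
        + Finsupp.single (redExp (G.i c2).natAbs (G.i c1)) 1
        - Finsupp.single (redExp (G.i c2).natAbs (- G.i c3)) 1)
    (hrel3 : G.gfun c3 = G'.gfun (Fin.cast hn.symm c3)
        + Finsupp.single (redExp (G.i c3).natAbs (G.i c1)) 1
        - Finsupp.single (redExp (G.i c3).natAbs (G.i c2)) 1)
    (hiden : G.i c1 + G.i c3 = G.i c2) :
    G.gfun c1 = G'.gfun (Fin.cast hn.symm c1) ∧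
    G.gfun c2 = G'.gfun (Fin.cast hn.symm c2) ∧
    G.gfun c3 = G'.gfun (Fin.cast hn.symm c3) ∧
    G'.F = G.F := by
  have e1 : -G.i c2 ≡ -G.i c3 [ZMOD G.i c1] := Int.modEq_iff_dvd.2 ⟨1, by linarith⟩
  have e2 : G.i c1 ≡ -G.i c3 [ZMOD G.i c2] := Int.modEq_iff_dvd.2 ⟨-1, by linarith⟩
  have e3 : G.i c1 ≡ G.i c2 [ZMOD G.i c3] := Int.modEq_iff_dvd.2 ⟨1, by linarith⟩
  have hg1 : G.gfun c1 = G'.gfun (Fin.cast hn.symm c1) := by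
    rw [hrel1, redExp_congr (Int.modEq_natAbs.2 e1), add_sub_cancel_right]
  have hg2 : G.gfun c2 = G'.gfun (Fin.cast hn.symm c2) := by
    rw [hrel2, redExp_congr (Int.modEq_natAbs.2 e2), add_sub_cancel_right]
  have hg3 : G.gfun c3 = G'.gfun (Fin.cast hn.symm c3) := by
    rw [hrel3, redExp_congr (Int.modEq_natAbs.2 e3), add_sub_cancel_right]
  refine ⟨hg1, hg2, hg3, GaussDiagram.F_eq_of_sign_gfun_eq hn fun c => ?_⟩
  rcases eq_or_ne c c1 with rfl | h1
  · exact ⟨hs1'.trans hs1.symm, hg1.symm⟩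
  rcases eq_or_ne c c2 with rfl | h2
  · exact ⟨hs2'.trans hs2.symm, hg2.symm⟩
  rcases eq_or_ne c c3 with rfl | h3
  · exact ⟨hs3'.trans hs3.symm, hg3.symm⟩
  exact hother c h1 h2 h3

/-- let `G` and `G'` be Gauss diagrams related by the oriented Reidemeister
III move `Ω_{3a}`, with the three mutually crossing chords `c₁, c₂, c₃` of `G`
corresponding to `c₁', c₂', c₃'` of `G'` (signs `+1, -1, +1` on both sides, all other
chords having unchanged signs and index functions).  Given the relations
`g_{cₖ}(v) = g_{cₖ'}(v) + v^{φ_{cₖ}(·)} - v^{φ_{cₖ}(·)}` coming from the move, and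
`i(c₁) + i(c₃) = i(c₂)`, it follows that `g_{cₖ}(v) = g_{cₖ'}(v)` for `k = 1, 2, 3`,
and hence `F_{G'}(u,v) = F_G(u,v)`. -/
theorem r3_invariance (G G' : GaussDiagram) (hn : G'.n = G.n)
    (c1 c2 c3 : Fin G.n) (h12 : c1 ≠ c2) (h13 : c1 ≠ c3) (h23 : c2 ≠ c3)
    (hs1 : G.sign c1 = 1) (hs2 : G.sign c2 = -1) (hs3 : G.sign c3 = 1)
    (hs1' : G'.sign (Fin.cast hn.symm c1) = 1)
    (hs2' : G'.sign (Fin.cast hn.symm c2) = -1)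
    (hs3' : G'.sign (Fin.cast hn.symm c3) = 1)
    (hother : ∀ c : Fin G.n, c ≠ c1 → c ≠ c2 → c ≠ c3 →
        G'.sign (Fin.cast hn.symm c) = G.sign c ∧
        G'.gfun (Fin.cast hn.symm c) = G.gfun c)
    (hrel1 : G.gfun c1 = G'.gfun (Fin.cast hn.symm c1)
        + Finsupp.single (redExp (G.i c1).natAbs (- G.i c2)) 1
        - Finsupp.single (redExp (G.i c1).natAbs (- G.i c3)) 1)
    (hrel2 : G.gfun c2 = G'.gfun (Fin.cast hn.symm c2)
        + Finsupp.single (redExp (G.i c2).natAbs (G.i c1)) 1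
        - Finsupp.single (redExp (G.i c2).natAbs (- G.i c3)) 1)
    (hrel3 : G.gfun c3 = G'.gfun (Fin.cast hn.symm c3)
        + Finsupp.single (redExp (G.i c3).natAbs (G.i c1)) 1
        - Finsupp.single (redExp (G.i c3).natAbs (G.i c2)) 1)
    (hiden : G.i c1 + G.i c3 = G.i c2) :
    G.gfun c1 = G'.gfun (Fin.cast hn.symm c1) ∧
    G.gfun c2 = G'.gfun (Fin.cast hn.symm c2) ∧
    G.gfun c3 = G'.gfun (Fin.cast hn.symm c3) ∧
    G'.F = G.F :=
  r3_invariance_general G G' hn c1 c2 c3 hs1 hs2 hs3 hs1' hs2' hs3' hother hrel1 hrel2 hrel3 hiden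
end
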